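/- Let Λ = Z_p⟦X⟧ and T^dec = Λ[y,z]/(y(y−p), z(z−X), (y−p)z, y(z−X)). Then T^dec is isomorphic as a Λ-algebra to the fiber product Λ ×_{F_p} Λ (pairs (a,b) ∈ Λ × Λ with a ≡ b mod the maximal ideal), via y ↦ (p,0) and z ↦ (X,0). Consequently, the kernel J^dec of the second projection T^dec → Λ is isomorphic as a Λ-module to the maximal ideal m_Λ = (p, X) of Λ, and J^dec/(J^dec)² ≅ m_Λ/m_Λ² is a 2-dimensional F_p-vector space, which is pseudo-null but not cyclic as a Λ-module. -/

import Mathlib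

/-!
Reducing with the four relations, every element of
`A[y, z]/(y(y−a), z(z−b), (y−a)z, y(z−b))` is `c + u y + v z`, and `y ↦ (a, 0)`, `z ↦ (b, 0)`
sends it to `(c + u a + v b, c)`. Hence the map onto `A ×_{A/(a, b)} A` is surjective, and it is
injective as soon as every syzygy of `(a, b)` is a multiple of the Koszul one: then
`u a + v b = 0` makes `u y + v z` a multiple of `b y − a z = (y − a) z − y (z − b)`. In `Λ` the
pair `(p, X)` has this property and generates `m_Λ`.

The kernel of the second projection is `{(m, 0) : m ∈ m_Λ} ≅ m_Λ`, with square
`{(m, 0) : m ∈ m_Λ²}`. The Koszul property also shows that `u p + v X ∈ m_Λ²` forces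
`u, v ∈ m_Λ`, so the classes of `p` and `X` are a basis of `m_Λ/m_Λ²` over `𝔽_p`: it is finite
of dimension 2, hence not cyclic.
-/

set_option synthInstance.maxHeartbeats 1000000
set_option maxHeartbeats 2000000
open IsLocalRing

/-- The one-variable Iwasawa algebra `Λ = ℤ_p⟦X⟧`. -/
abbrev Lam11 (p : ℕ) [Fact p.Prime] : Type := PowerSeries ℤ_[p]

/-- The ideal `(y(y−p), z(z−X), (y−p)z, y(z−X)) ⊆ Λ[y,z]`. -/
noncomputable def Idec (p : ℕ) [Fact p.Prime] : Ideal (MvPolynomial (Fin 2) (Lam11 p)) :=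
  Ideal.span
    {MvPolynomial.X 0 * (MvPolynomial.X 0 - MvPolynomial.C ((p : Lam11 p))),
     MvPolynomial.X 1 * (MvPolynomial.X 1 - MvPolynomial.C PowerSeries.X),
     (MvPolynomial.X 0 - MvPolynomial.C ((p : Lam11 p))) * MvPolynomial.X 1,
     MvPolynomial.X 0 * (MvPolynomial.X 1 - MvPolynomial.C PowerSeries.X)}

/-- The ring `T^dec = Λ[y,z]/(y(y−p), z(z−X), (y−p)z, y(z−X))`. -/
abbrev Tdec (p : ℕ) [Fact p.Prime] : Type :=
  MvPolynomial (Fin 2) (Lam11 p) ⧸ Idec p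

/-- The fiber product `Λ ×_{𝔽_p} Λ`: pairs `(a, b)` with `a ≡ b` modulo the maximal ideal,
as a `Λ`-subalgebra of `Λ × Λ`. -/
def fiberProd (p : ℕ) [Fact p.Prime] : Subalgebra (Lam11 p) (Lam11 p × Lam11 p) where
  carrier := {a | a.1 - a.2 ∈ maximalIdeal (Lam11 p)}
  mul_mem' := by
    intro a b ha hb
    show a.1 * b.1 - a.2 * b.2 ∈ maximalIdeal (Lam11 p)
    have h : a.1 * b.1 - a.2 * b.2 = a.1 * (b.1 - b.2) + (a.1 - a.2) * b.2 := by ring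
    rw [h]
    exact add_mem (Ideal.mul_mem_left _ _ hb) (Ideal.mul_mem_right _ _ ha)
  one_mem' := by
    show (1 : Lam11 p) - 1 ∈ maximalIdeal (Lam11 p); simp
  add_mem' := by
    intro a b ha hb
    show a.1 + b.1 - (a.2 + b.2) ∈ maximalIdeal (Lam11 p)
    have h : a.1 + b.1 - (a.2 + b.2) = (a.1 - a.2) + (b.1 - b.2) := by ring
    rw [h]
    exact add_mem ha hb
  zero_mem' := by
    show (0 : Lam11 p) - 0 ∈ maximalIdeal (Lam11 p); simp
  algebraMap_mem' := by
    intro r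
    show r - r ∈ maximalIdeal (Lam11 p); simp

/-- The second projection `Λ ×_{𝔽_p} Λ → Λ`. -/
noncomputable def proj2 (p : ℕ) [Fact p.Prime] : ↥(fiberProd p) →+* Lam11 p :=
  (RingHom.snd (Lam11 p) (Lam11 p)).comp (fiberProd p).val.toRingHom

namespace Ideal

variable {A : Type*} [CommRing A] (I : Ideal A)

/-- `A ×_{A/I} A`, i.e. D'Anna's amalgamated duplication `A ⋈ I`. -/
def duplication : Subalgebra A (A × A) where
  carrier := {x | x.1 - x.2 ∈ I}
  mul_mem' {x y} hx hy := by
    have h : x.1 * y.1 - x.2 * y.2 = x.1 * (y.1 - y.2) + (x.1 - x.2) * y.2 := by ring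
    show x.1 * y.1 - x.2 * y.2 ∈ I
    exact h ▸ add_mem (I.mul_mem_left _ hy) (I.mul_mem_right _ hx)
  add_mem' {x y} hx hy := by
    have h : x.1 + y.1 - (x.2 + y.2) = (x.1 - x.2) + (y.1 - y.2) := by ring
    show x.1 + y.1 - (x.2 + y.2) ∈ I
    exact h ▸ add_mem hx hy
  algebraMap_mem' r := by simp

theorem mem_duplication {x : A × A} : x ∈ I.duplication ↔ x.1 - x.2 ∈ I := Iff.rfl

def duplicationOfMem {a : A} (ha : a ∈ I) : I.duplication :=
  ⟨(a, 0), by simpa [mem_duplication] using ha⟩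

@[simp]
theorem coe_duplicationOfMem {a : A} (ha : a ∈ I) :
    (I.duplicationOfMem ha : A × A) = (a, 0) := rfl

def duplicationFst : I.duplication →ₐ[A] A := (AlgHom.fst A A A).comp I.duplication.val

def duplicationSnd : I.duplication →+* A :=
  (RingHom.snd A A).comp I.duplication.val.toRingHom

theorem eq_duplicationOfMem_of_mem_ker {x : I.duplication}
    (hx : x ∈ RingHom.ker I.duplicationSnd) :
    ∃ ha : (x : A × A).1 ∈ I, x = I.duplicationOfMem ha := by
  have hx2 : (x : A × A).2 = 0 := hx
  have ha : (x : A × A).1 ∈ I := by simpa [hx2] using I.mem_duplication.mp x.2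
  exact ⟨ha, Subtype.ext (Prod.ext rfl hx2)⟩

theorem duplicationOfMem_mem_ker {a : A} (ha : a ∈ I) :
    I.duplicationOfMem ha ∈ RingHom.ker I.duplicationSnd := rfl

noncomputable def kerDuplicationSndEquiv :
    (RingHom.ker I.duplicationSnd).restrictScalars A ≃ₗ[A] I where
  toFun x := ⟨(x : A × A).1, (I.eq_duplicationOfMem_of_mem_ker x.2).1⟩
  map_add' _ _ := rfl
  map_smul' _ _ := rfl
  invFun a := ⟨I.duplicationOfMem a.2, I.duplicationOfMem_mem_ker a.2⟩
  left_inv x := Subtype.ext (I.eq_duplicationOfMem_of_mem_ker x.2).2.symm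
  right_inv _ := rfl

theorem map_duplicationFst_ker :
    (RingHom.ker I.duplicationSnd).map I.duplicationFst = I := by
  apply le_antisymm
  · rw [Ideal.map_le_iff_le_comap]
    intro x hx
    obtain ⟨ha, -⟩ := I.eq_duplicationOfMem_of_mem_ker hx
    exact ha
  · intro a ha
    exact Ideal.mem_map_of_mem _ (I.duplicationOfMem_mem_ker ha)

theorem duplicationFst_surjective : Function.Surjective I.duplicationFst :=
  fun a => ⟨algebraMap A _ a, rfl⟩

theorem mem_ker_sq_of_fst_mem_sq {x : I.duplication} (hx : x ∈ RingHom.ker I.duplicationSnd)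
    (h : (x : A × A).1 ∈ I ^ 2) : x ∈ RingHom.ker I.duplicationSnd ^ 2 := by
  have h' : I.duplicationFst x ∈ (RingHom.ker I.duplicationSnd).map I.duplicationFst ^ 2 := by
    rwa [I.map_duplicationFst_ker]
  rw [← Ideal.map_pow, Ideal.mem_map_iff_of_surjective _ I.duplicationFst_surjective] at h'
  obtain ⟨y, hy, hyx⟩ := h'
  have hy2 : (y : A × A).2 = 0 := Ideal.pow_le_self two_ne_zero hy
  have hx2 : (x : A × A).2 = 0 := hx
  rwa [← Subtype.ext (Prod.ext hyx (hy2.trans hx2.symm))]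

noncomputable def kerDuplicationSndCotangentEquiv :
    (RingHom.ker I.duplicationSnd).Cotangent ≃ₗ[A] I.Cotangent := by
  refine LinearEquiv.ofBijective
    ((RingHom.ker I.duplicationSnd).mapCotangent I I.duplicationFst
      (Ideal.map_le_iff_le_comap.mp I.map_duplicationFst_ker.le)) ⟨?_, ?_⟩
  · rw [← LinearMap.ker_eq_bot, LinearMap.ker_eq_bot']
    intro x hx
    obtain ⟨x, rfl⟩ := Ideal.toCotangent_surjective _ x
    rw [Ideal.mapCotangent_toCotangent, Ideal.toCotangent_eq_zero] at hx
    rw [Ideal.toCotangent_eq_zero]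
    exact I.mem_ker_sq_of_fst_mem_sq x.2 hx
  · intro z
    obtain ⟨a, rfl⟩ := Ideal.toCotangent_surjective _ z
    exact ⟨_, (Ideal.mapCotangent_toCotangent _ _ _ _
      ⟨_, I.duplicationOfMem_mem_ker a.2⟩).trans rfl⟩

end Ideal

section Presentation

open MvPolynomial

variable {A : Type*} [CommRing A] (a b : A)

/-- The relations `y(y−a), z(z−b), (y−a)z, y(z−b)`, with `y = X 0` and `z = X 1`. -/
noncomputable def decIdeal : Ideal (MvPolynomial (Fin 2) A) :=
  Ideal.span {X 0 * (X 0 - C a), X 1 * (X 1 - C b), (X 0 - C a) * X 1, X 0 * (X 1 - C b)}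

/-- The first homology of the Koszul complex on `(a, b)` vanishes. -/
def IsKoszulPair : Prop :=
  ∀ u v : A, u * a + v * b = 0 → ∃ w, u = w * b ∧ v = -(w * a)

noncomputable def decToDuplication :
    MvPolynomial (Fin 2) A →ₐ[A] (Ideal.span {a, b}).duplication :=
  aeval ![(Ideal.span {a, b}).duplicationOfMem (Ideal.subset_span (Set.mem_insert a _)),
    (Ideal.span {a, b}).duplicationOfMem (Ideal.subset_span (Set.mem_insert_of_mem _ rfl))]

theorem coe_decToDuplication_affine (c u v : A) :
    (decToDuplication a b (C c + C u * X 0 + C v * X 1) : A × A) = (c + u * a + v * b, c) := by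
  ext <;> simp [decToDuplication, Algebra.algebraMap_eq_smul_one]

theorem decIdeal_le_ker : decIdeal a b ≤ RingHom.ker (decToDuplication a b) := by
  rw [decIdeal, Ideal.span_le]
  rintro q (rfl | rfl | rfl | rfl) <;>
    exact Subtype.ext (Prod.ext (by simp [decToDuplication]) (by simp [decToDuplication]))

theorem exists_sub_affine_mem_decIdeal (q : MvPolynomial (Fin 2) A) :
    ∃ c u v : A, q - (C c + C u * X 0 + C v * X 1) ∈ decIdeal a b := by
  have hyy : X 0 * (X 0 - C a) ∈ decIdeal a b := Ideal.subset_span (by simp)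
  have hzz : X 1 * (X 1 - C b) ∈ decIdeal a b := Ideal.subset_span (by simp)
  have hyz : (X 0 - C a) * X 1 ∈ decIdeal a b := Ideal.subset_span (by simp)
  have hyz' : X 0 * (X 1 - C b) ∈ decIdeal a b := Ideal.subset_span (by simp)
  induction q using MvPolynomial.induction_on with
  | C c => exact ⟨c, 0, 0, by simp⟩
  | add q r hq hr =>
    obtain ⟨c, u, v, hq⟩ := hq
    obtain ⟨c', u', v', hr⟩ := hr
    refine ⟨c + c', u + u', v + v', ?_⟩
    convert add_mem hq hr using 1
    simp only [map_add]
    ring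
  | mul_X q i hq =>
    obtain ⟨c, u, v, hq⟩ := hq
    fin_cases i <;> simp only [Fin.zero_eta, Fin.mk_one, Fin.isValue]
    · refine ⟨0, c + u * a, v * a, ?_⟩
      convert add_mem (Ideal.mul_mem_right (X 0) _ hq)
        (add_mem (Ideal.mul_mem_left _ (C u) hyy) (Ideal.mul_mem_left _ (C v) hyz)) using 1
      simp only [map_zero, map_add, map_mul]
      ring
    · refine ⟨0, u * b, c + v * b, ?_⟩
      convert add_mem (Ideal.mul_mem_right (X 1) _ hq)
        (add_mem (Ideal.mul_mem_left _ (C u) hyz') (Ideal.mul_mem_left _ (C v) hzz)) using 1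
      simp only [map_zero, map_add, map_mul]
      ring

theorem koszul_mem_decIdeal : C b * X 0 - C a * X 1 ∈ decIdeal a b := by
  have hyz : (X 0 - C a) * X 1 ∈ decIdeal a b := Ideal.subset_span (by simp)
  have hyz' : X 0 * (X 1 - C b) ∈ decIdeal a b := Ideal.subset_span (by simp)
  convert sub_mem hyz hyz' using 1
  ring

theorem decToDuplication_surjective : Function.Surjective (decToDuplication a b) := by
  rintro ⟨⟨s, t⟩, hst⟩
  obtain ⟨u, v, huv⟩ := Ideal.mem_span_pair.mp hst
  refine ⟨C t + C u * X 0 + C v * X 1, Subtype.ext ?_⟩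
  rw [coe_decToDuplication_affine]
  ext
  · dsimp only
    linear_combination huv
  · rfl

theorem ker_decToDuplication (h : IsKoszulPair a b) :
    RingHom.ker (decToDuplication a b) = decIdeal a b := by
  refine le_antisymm (fun q hq => ?_) (decIdeal_le_ker a b)
  obtain ⟨c, u, v, hqr⟩ := exists_sub_affine_mem_decIdeal a b q
  have hr : decToDuplication a b (C c + C u * X 0 + C v * X 1) = 0 := by
    have := decIdeal_le_ker a b hqr
    rwa [RingHom.mem_ker, map_sub, RingHom.mem_ker.mp hq, zero_sub, neg_eq_zero] at this
  have hcoe := congrArg Subtype.val hr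
  rw [coe_decToDuplication_affine] at hcoe
  obtain ⟨hc, hc'⟩ := Prod.ext_iff.mp hcoe
  obtain rfl : c = 0 := hc'
  obtain ⟨w, rfl, rfl⟩ := h u v (by simpa using hc)
  have hrel : C 0 + C (w * b) * X 0 + C (-(w * a)) * X 1 ∈ decIdeal a b := by
    convert Ideal.mul_mem_left _ (C w) (koszul_mem_decIdeal a b) using 1
    simp only [map_zero, map_mul, map_neg]
    ring
  simpa using add_mem hqr hrel

noncomputable def decEquivDuplication (h : IsKoszulPair a b) :
    (MvPolynomial (Fin 2) A ⧸ decIdeal a b) ≃ₐ[A] (Ideal.span {a, b}).duplication :=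
  (Ideal.quotientEquivAlgOfEq A (ker_decToDuplication a b h)).symm.trans
    (Ideal.quotientKerAlgEquivOfSurjective (decToDuplication_surjective a b))

@[simp]
theorem decToDuplication_X (i : Fin 2) :
    (decToDuplication a b (X i) : A × A) = (![a, b] i, 0) := by
  fin_cases i <;> simp [decToDuplication]

end Presentation

section Cotangent

variable {A : Type*} [CommRing A] {a b : A}

theorem IsKoszulPair.mem_span_of_mul_add_mul_mem_sq (h : IsKoszulPair a b) {u v : A}
    (huv : u * a + v * b ∈ Ideal.span {a, b} ^ 2) :
    u ∈ Ideal.span {a, b} ∧ v ∈ Ideal.span {a, b} := by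
  rw [sq] at huv
  nth_rw 2 [Ideal.span_insert] at huv
  rw [Ideal.mul_sup, Submodule.mem_sup] at huv
  obtain ⟨_, hαa, _, hβb, hsum⟩ := huv
  obtain ⟨α, hα, rfl⟩ := Ideal.mem_mul_span_singleton.mp hαa
  obtain ⟨β, hβ, rfl⟩ := Ideal.mem_mul_span_singleton.mp hβb
  obtain ⟨w, hw, hw'⟩ := h (u - α) (v - β) (by linear_combination -hsum)
  have ha : a ∈ Ideal.span {a, b} := Ideal.subset_span (Set.mem_insert a _)
  have hb : b ∈ Ideal.span {a, b} := Ideal.subset_span (Set.mem_insert_of_mem _ rfl)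
  refine ⟨?_, ?_⟩
  · rw [← sub_add_cancel u α, hw]
    exact add_mem (Ideal.mul_mem_left _ w hb) hα
  · rw [← sub_add_cancel v β, hw', ← neg_mul]
    exact add_mem (Ideal.mul_mem_left _ (-w) ha) hβ

namespace IsLocalRing

variable [IsLocalRing A]

theorem residue_smul_cotangentSpace (r : A) (x : CotangentSpace A) : residue A r • x = r • x :=
  algebraMap_smul (ResidueField A) r x

theorem finrank_cotangentSpace_eq_two (hm : maximalIdeal A = Ideal.span {a, b})
    (h : IsKoszulPair a b) : Module.finrank (ResidueField A) (CotangentSpace A) = 2 := by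
  obtain ⟨a, rfl⟩ : ∃ a' : maximalIdeal A, (a' : A) = a :=
    ⟨⟨a, hm ▸ Ideal.subset_span (Set.mem_insert a _)⟩, rfl⟩
  obtain ⟨b, rfl⟩ : ∃ b' : maximalIdeal A, (b' : A) = b :=
    ⟨⟨b, hm ▸ Ideal.subset_span (Set.mem_insert_of_mem _ rfl)⟩, rfl⟩
  have hv (r s : A) : r • (maximalIdeal A).toCotangent a + s • (maximalIdeal A).toCotangent b =
      (maximalIdeal A).toCotangent (r • a + s • b) := by
    simp
  have hli : LinearIndependent (ResidueField A)
      ![(maximalIdeal A).toCotangent a, (maximalIdeal A).toCotangent b] := by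
    rw [LinearIndependent.pair_iff]
    intro r s hrs
    obtain ⟨r, rfl⟩ := residue_surjective r
    obtain ⟨s, rfl⟩ := residue_surjective s
    rw [residue_smul_cotangentSpace, residue_smul_cotangentSpace, hv,
      Ideal.toCotangent_eq_zero] at hrs
    obtain ⟨hr, hs⟩ :=
      h.mem_span_of_mul_add_mul_mem_sq (u := r) (v := s) (by simpa [← hm] using hrs)
    rw [← hm] at hr hs
    exact ⟨(residue_eq_zero_iff r).mpr hr, (residue_eq_zero_iff s).mpr hs⟩
  have hsp : ⊤ ≤ Submodule.span (ResidueField A)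
      (Set.range ![(maximalIdeal A).toCotangent a, (maximalIdeal A).toCotangent b]) := by
    rintro x -
    obtain ⟨x, rfl⟩ := (maximalIdeal A).toCotangent_surjective x
    obtain ⟨r, s, hrs⟩ :=
      Ideal.mem_span_pair.mp (hm ▸ x.2 : (x : A) ∈ Ideal.span {(a : A), (b : A)})
    rw [Matrix.range_cons_cons_empty, Submodule.mem_span_pair]
    refine ⟨residue A r, residue A s, ?_⟩
    rw [residue_smul_cotangentSpace, residue_smul_cotangentSpace, hv]
    exact congrArg _ (Subtype.ext (by simpa using hrs))
  rw [Module.finrank_eq_card_basis (Module.Basis.mk hli hsp), Fintype.card_fin]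

theorem finrank_cotangentSpace_le_one_of_span_singleton_eq_top {x : CotangentSpace A}
    (hx : Submodule.span A {x} = ⊤) :
    Module.finrank (ResidueField A) (CotangentSpace A) ≤ 1 := by
  have hK : Submodule.span (ResidueField A) {x} = ⊤ := by
    have := Submodule.span_le_restrictScalars A (ResidueField A) {x}
    rw [hx] at this
    exact eq_top_iff.mpr fun y _ => this Submodule.mem_top
  rw [← finrank_top, ← hK]
  exact (finrank_span_le_card {x}).trans (by simp)

end IsLocalRing

end Cotangent

namespace PowerSeries

variable {R : Type*} [CommRing R]

theorem isKoszulPair_C_X {r : R} (hr : r ∈ nonZeroDivisors R) :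
    IsKoszulPair (C r) (X : R⟦X⟧) := by
  intro u v huv
  have hu : constantCoeff u = 0 := by
    simpa [mul_right_mem_nonZeroDivisors_eq_zero_iff hr] using congrArg constantCoeff huv
  obtain ⟨w, rfl⟩ := X_dvd_iff.mpr hu
  have hv : w * C r + v = 0 := X_mul_cancel (by linear_combination huv)
  exact ⟨w, mul_comm _ _, by linear_combination hv⟩

variable [IsLocalRing R]

theorem mem_maximalIdeal_iff {f : R⟦X⟧} :
    f ∈ maximalIdeal R⟦X⟧ ↔ constantCoeff f ∈ maximalIdeal R := by
  simp only [mem_maximalIdeal, mem_nonunits_iff, isUnit_iff_constantCoeff]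

theorem maximalIdeal_eq_span_C_X {π : R} (hπ : maximalIdeal R = Ideal.span {π}) :
    maximalIdeal R⟦X⟧ = Ideal.span {C π, X} := by
  refine le_antisymm (fun f hf => ?_) ?_
  · obtain ⟨u, hu⟩ := Ideal.mem_span_singleton'.mp (hπ ▸ mem_maximalIdeal_iff.mp hf)
    obtain ⟨g, hg⟩ := X_dvd_iff.mpr (show constantCoeff (f - C (constantCoeff f)) = 0 by simp)
    refine Ideal.mem_span_pair.mpr ⟨C u, g, ?_⟩
    rw [← map_mul, hu, mul_comm]
    linear_combination -hg
  · rw [Ideal.span_le, Set.insert_subset_iff, Set.singleton_subset_iff]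
    exact ⟨mem_maximalIdeal_iff.mpr (by simp [hπ]), mem_maximalIdeal_iff.mpr (by simp)⟩

instance isLocalHom_C : IsLocalHom (C : R →+* R⟦X⟧) :=
  ⟨fun r hr => by simpa using isUnit_iff_constantCoeff.mp hr⟩

theorem residueField_map_C_surjective :
    Function.Surjective (ResidueField.map (C : R →+* R⟦X⟧)) := by
  intro x
  obtain ⟨f, rfl⟩ := residue_surjective x
  refine ⟨residue R (constantCoeff f), ?_⟩
  rw [ResidueField.map_residue]
  exact Ideal.Quotient.eq.mpr (mem_maximalIdeal_iff.mpr (by simp))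

instance [Finite (ResidueField R)] : Finite (ResidueField R⟦X⟧) :=
  Finite.of_surjective _ residueField_map_C_surjective

end PowerSeries

namespace Lam11

variable (p : ℕ) [Fact p.Prime]

theorem natCast_eq_C : (p : Lam11 p) = PowerSeries.C (p : ℤ_[p]) := (map_natCast _ p).symm

theorem maximalIdeal_eq_span :
    maximalIdeal (Lam11 p) = Ideal.span {(p : Lam11 p), PowerSeries.X} := by
  rw [natCast_eq_C, PowerSeries.maximalIdeal_eq_span_C_X PadicInt.maximalIdeal_eq_span_p]

theorem isKoszulPair : IsKoszulPair (p : Lam11 p) PowerSeries.X := by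
  rw [natCast_eq_C]
  exact PowerSeries.isKoszulPair_C_X
    (mem_nonZeroDivisors_of_ne_zero (by exact_mod_cast (Fact.out : p.Prime).ne_zero))

end Lam11

/-- `T^dec = Λ[y,z]/(y(y−p), z(z−X), (y−p)z, y(z−X))` is isomorphic as a
`Λ`-algebra to the fiber product `Λ ×_{𝔽_p} Λ` via `y ↦ (p, 0)`, `z ↦ (X, 0)`.  Consequently
the kernel `J^dec` of the second projection is isomorphic as a `Λ`-module to the maximal ideal
`m_Λ = (p, X)`, `J^dec/(J^dec)² ≅ m_Λ/m_Λ²` is a two-dimensional `𝔽_p`-vector space, which is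
pseudo-null (finite) but not cyclic as a `Λ`-module. -/
theorem Tdec_iso_fiberProduct (p : ℕ) [Fact p.Prime] :
    (∃ e : Tdec p ≃ₐ[Lam11 p] ↥(fiberProd p),
      ((e (Ideal.Quotient.mk (Idec p) (MvPolynomial.X 0)) : ↥(fiberProd p)) :
          Lam11 p × Lam11 p) = ((p : Lam11 p), 0) ∧
      ((e (Ideal.Quotient.mk (Idec p) (MvPolynomial.X 1)) : ↥(fiberProd p)) :
          Lam11 p × Lam11 p) = (PowerSeries.X, 0)) ∧
    Nonempty (↥((RingHom.ker (proj2 p)).restrictScalars (Lam11 p))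
      ≃ₗ[Lam11 p] ↥(maximalIdeal (Lam11 p))) ∧
    Nonempty ((RingHom.ker (proj2 p)).Cotangent ≃+ (maximalIdeal (Lam11 p)).Cotangent) ∧
    Module.finrank (ResidueField (Lam11 p)) (CotangentSpace (Lam11 p)) = 2 ∧
    Finite ((maximalIdeal (Lam11 p)).Cotangent) ∧
    ¬ ∃ v : (maximalIdeal (Lam11 p)).Cotangent,
        Submodule.span (Lam11 p) {v} = ⊤ := by
  have hm := Lam11.maximalIdeal_eq_span p
  let e : Tdec p ≃ₐ[Lam11 p] (maximalIdeal (Lam11 p)).duplication :=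
    (decEquivDuplication _ _ (Lam11.isKoszulPair p)).trans
      (Subalgebra.equivOfEq _ _ (congrArg Ideal.duplication hm.symm))
  have hrank : Module.finrank (ResidueField (Lam11 p)) (CotangentSpace (Lam11 p)) = 2 :=
    finrank_cotangentSpace_eq_two hm (Lam11.isKoszulPair p)
  have : Module.Finite (ResidueField (Lam11 p)) (CotangentSpace (Lam11 p)) :=
    Module.finite_of_finrank_pos (by omega)
  refine ⟨⟨e, decToDuplication_X _ _ 0, decToDuplication_X _ _ 1⟩,
    ⟨(maximalIdeal (Lam11 p)).kerDuplicationSndEquiv⟩,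
    ⟨LinearEquiv.toAddEquiv (maximalIdeal (Lam11 p)).kerDuplicationSndCotangentEquiv⟩, hrank,
    Module.finite_of_finite (ResidueField (Lam11 p)), fun ⟨v, hv⟩ => ?_⟩
  have := finrank_cotangentSpace_le_one_of_span_singleton_eq_top hv
  omega
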